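/- Let k be a field of prime characteristic p, let P be a finite p-group, and let E be a finite group of order prime to p acting on P by automorphisms. Then: (i) every E-stable derivation f on kP extends uniquely to a derivation f̂ on the group algebra k(P⋊E) whose kernel contains kE (explicitly, f̂(uy) = f(u)y for u ∈ P, y ∈ E); (ii) the correspondence f ↦ f̂ induces an injective Lie algebra homomorphism HH^1(kP)^E → HH^1(k(P⋊E)); (iii) if E acts freely on P∖{1}, this homomorphism is an isomorphism. -/

import Mathlib

/-!
Write `k(P ⋊ E) = ⊕_{y ∈ E} kP * y`. An endomorphism `f` of `kP` extends by `f̂ (a * y) = f a * y`;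
`f ↦ f̂` is an algebra homomorphism, `f̂` is a derivation killing `kE` when `f` is an `E`-stable
derivation, and every such derivation extending `f` agrees with `f̂` on the spanning set `kP * E`.
Inner derivations match up: an `E`-stable `[c, -]` equals `[c̄, -]` for the `E`-average `c̄` of `c`,
and then `f̂ = [c̄, -]`; conversely, if `f̂ = [C, -]` then `f = [C₁, -]` for the `1`-component `C₁`
of `C`.

For surjectivity, let `g` be a derivation of `k(P ⋊ E)`. As `|E|` is invertible, `H¹(E, -) = 0`,
so after subtracting an inner derivation `g` kills `kE`. For `y ≠ 1` the `y`-component of `g` on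
`kP` is a `(1, φ y)`-twisted derivation of `kP`. When `E` acts freely, `P` acts freely on itself by
`v ↦ u * v * (φ y u)⁻¹`, so this twisted derivation is inner. Subtracting the corresponding inner
derivation, averaged over conjugation by `E` so that `kE` is still killed, leaves some `f̂`.
-/

namespace HHPaper

open MonoidAlgebra

attribute [local instance 100] LieRing.ofAssociativeRing

section Derivations

variable {k A : Type*} [CommRing k] [Ring A] [Algebra k A]

/-- `f` is a derivation on the associative unital `k`-algebra `A`. -/
def IsDerivation (f : Module.End k A) : Prop :=
  ∀ a b : A, f (a * b) = f a * b + a * f b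

lemma IsDerivation.add {f g : Module.End k A} (hf : IsDerivation f) (hg : IsDerivation g) :
    IsDerivation (f + g) := by
  intro a b
  simp only [LinearMap.add_apply, hf a b, hg a b, add_mul, mul_add]
  abel

lemma IsDerivation.zero : IsDerivation (0 : Module.End k A) := by
  intro a b; simp

lemma IsDerivation.smul (c : k) {f : Module.End k A} (hf : IsDerivation f) :
    IsDerivation (c • f) := by
  intro a b
  simp only [LinearMap.smul_apply, hf a b, smul_add, smul_mul_assoc, mul_smul_comm]

lemma IsDerivation.lie {f g : Module.End k A} (hf : IsDerivation f) (hg : IsDerivation g) :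
    IsDerivation ⁅f, g⁆ := by
  intro a b
  simp only [Ring.lie_def, LinearMap.sub_apply, Module.End.mul_apply]
  rw [hg a b, hf a b, map_add, map_add, hf (g a) b, hf a (g b), hg (f a) b, hg a (f b)]
  simp only [sub_mul, mul_sub, add_mul, mul_add]
  abel

variable (k A) in
/-- The Lie algebra of derivations on `A`, as a Lie subalgebra of `Module.End k A`. -/
def derivLie : LieSubalgebra k (Module.End k A) where
  carrier := {f | IsDerivation f}
  add_mem' := fun hf hg => hf.add hg
  zero_mem' := IsDerivation.zero
  smul_mem' := fun c _ hf => hf.smul c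
  lie_mem' := fun hf hg => hf.lie hg

@[simp] lemma mem_derivLie {f : Module.End k A} :
    f ∈ derivLie k A ↔ IsDerivation f := Iff.rfl

variable (k) in
/-- The inner derivation `[c, -]` associated with `c : A`. -/
def innerDeriv (c : A) : Module.End k A :=
  LinearMap.mulLeft k c - LinearMap.mulRight k c

@[simp] lemma innerDeriv_apply (c a : A) : innerDeriv k c a = c * a - a * c := rfl

lemma innerDeriv_isDerivation (c : A) : IsDerivation (innerDeriv k c) := by
  intro a b
  simp only [innerDeriv_apply, sub_mul, mul_sub, mul_assoc]
  abel

lemma innerDeriv_add (c d : A) :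
    innerDeriv k (c + d) = innerDeriv k c + innerDeriv k d := by
  ext a; simp only [innerDeriv_apply, LinearMap.add_apply, add_mul, mul_add]; abel

lemma innerDeriv_smul (s : k) (c : A) :
    innerDeriv k (s • c) = s • innerDeriv k c := by
  ext a
  simp only [innerDeriv_apply, LinearMap.smul_apply, smul_sub, smul_mul_assoc, mul_smul_comm]

lemma innerDeriv_zero : innerDeriv k (0 : A) = 0 := by
  ext a; simp

variable (k A) in
/-- The Lie ideal of inner derivations inside the Lie algebra of derivations. -/
def innerIdeal : LieIdeal k (derivLie k A) where
  carrier := {f | ∃ c : A, (f : Module.End k A) = innerDeriv k c}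
  add_mem' := by
    rintro f g ⟨c, hc⟩ ⟨d, hd⟩
    exact ⟨c + d, by simp [innerDeriv_add, hc, hd]⟩
  zero_mem' := ⟨0, by simp [innerDeriv_zero]⟩
  smul_mem' := by
    rintro s f ⟨c, hc⟩
    exact ⟨s • c, by rw [innerDeriv_smul]; rw [← hc]; rfl⟩
  lie_mem := by
    rintro x m ⟨c, hc⟩
    refine ⟨(x : Module.End k A) c, ?_⟩
    have hx : IsDerivation (x : Module.End k A) := x.2
    ext a
    have hb : ((⁅x, m⁆ : derivLie k A) : Module.End k A) =
        ⁅(x : Module.End k A), (m : Module.End k A)⁆ := rfl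
    rw [hb, hc]
    simp only [Ring.lie_def, LinearMap.sub_apply, Module.End.mul_apply, innerDeriv_apply,
      map_sub, hx c a, hx a c]
    abel

variable (k A) in
/-- First Hochschild cohomology of `A`, as the quotient Lie algebra of derivations
modulo inner derivations. -/
abbrev HH1 := (derivLie k A) ⧸ (innerIdeal k A)

variable (k A) in
/-- The Jacobson radical of `A`, regarded as a `k`-subspace of `A`. -/
def jacRad : Submodule k A :=
  Submodule.restrictScalars k (Ideal.jacobson (⊥ : Ideal A))

variable (k A) in
/-- The Lie subalgebra of derivations with image contained in the `m`-th power of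
the Jacobson radical. -/
def derivRadLie (m : ℕ) : LieSubalgebra k (Module.End k A) where
  carrier := {f | IsDerivation f ∧ LinearMap.range f ≤ (jacRad k A) ^ m}
  add_mem' := by
    rintro f g ⟨hf, hf'⟩ ⟨hg, hg'⟩
    refine ⟨hf.add hg, ?_⟩
    rintro x ⟨a, rfl⟩
    exact add_mem (hf' ⟨a, rfl⟩) (hg' ⟨a, rfl⟩)
  zero_mem' := ⟨IsDerivation.zero, by rintro x ⟨a, rfl⟩; simp⟩
  smul_mem' := by
    rintro s f ⟨hf, hf'⟩
    refine ⟨hf.smul s, ?_⟩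
    rintro x ⟨a, rfl⟩
    exact Submodule.smul_mem _ s (hf' ⟨a, rfl⟩)
  lie_mem' := by
    rintro f g ⟨hf, hf'⟩ ⟨hg, hg'⟩
    refine ⟨hf.lie hg, ?_⟩
    rintro x ⟨a, rfl⟩
    have : ⁅f, g⁆ a = f (g a) - g (f a) := by
      simp [Ring.lie_def, Module.End.mul_apply]
    rw [this]
    exact sub_mem (hf' ⟨g a, rfl⟩) (hg' ⟨f a, rfl⟩)

@[simp] lemma mem_derivRadLie {m : ℕ} {f : Module.End k A} :
    f ∈ derivRadLie k A m ↔ IsDerivation f ∧ LinearMap.range f ≤ (jacRad k A) ^ m := Iff.rfl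

variable (k A) in
/-- The Loewy length of `A`: the least positive `n` with `J(A)^n = 0`. -/
noncomputable def loewyLength : ℕ :=
  sInf {n : ℕ | 0 < n ∧ (jacRad k A) ^ n = ⊥}

/-- A semisimple-style multiplicity freeness: any two isomorphic simple submodules
coincide. -/
def IsMultiplicityFree (R M : Type*) [Ring R] [AddCommGroup M] [Module R M] : Prop :=
  ∀ S T : Submodule R M, IsSimpleModule R S → IsSimpleModule R T →
    Nonempty (S ≃ₗ[R] T) → S = T

end Derivations

section GroupAlgebra

open MonoidAlgebra

variable (k : Type*) [CommRing k] {P E : Type*} [Group P] [Group E]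

/-- The subgroup `[P,E]` generated by the elements `(ᵉu)u⁻¹`. -/
def commSubgroupE (φ : E →* MulAut P) : Subgroup P :=
  Subgroup.closure {x : P | ∃ (e : E) (u : P), x = φ e u * u⁻¹}

/-- A linear endomorphism of `kP` is `E`-stable if it commutes with the `E`-action. -/
def IsEStable (φ : E →* MulAut P) (f : Module.End k (MonoidAlgebra k P)) : Prop :=
  ∀ (e : E) (a : MonoidAlgebra k P),
    f (MonoidAlgebra.domCongr k k (φ e) a) = MonoidAlgebra.domCongr k k (φ e) (f a)

/-- The Lie algebra `Der(kP)^E` of `E`-stable derivations on the group algebra `kP`. -/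
def eStableDerivLie (φ : E →* MulAut P) :
    LieSubalgebra k (Module.End k (MonoidAlgebra k P)) where
  carrier := {f | IsDerivation f ∧ IsEStable k φ f}
  add_mem' := by
    rintro f g ⟨hf, hf'⟩ ⟨hg, hg'⟩
    exact ⟨hf.add hg, fun e a => by simp [LinearMap.add_apply, hf' e a, hg' e a]⟩
  zero_mem' := ⟨IsDerivation.zero, fun e a => by simp⟩
  smul_mem' := by
    rintro s f ⟨hf, hf'⟩
    refine ⟨hf.smul s, fun e a => ?_⟩
    simp only [LinearMap.smul_apply, hf' e a, map_smul]
  lie_mem' := by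
    rintro f g ⟨hf, hf'⟩ ⟨hg, hg'⟩
    refine ⟨hf.lie hg, fun e a => ?_⟩
    simp only [Ring.lie_def, LinearMap.sub_apply, Module.End.mul_apply, hf' e, hg' e, map_sub]

@[simp] lemma mem_eStableDerivLie {φ : E →* MulAut P} {f : Module.End k (MonoidAlgebra k P)} :
    f ∈ eStableDerivLie k φ ↔ IsDerivation f ∧ IsEStable k φ f := Iff.rfl

end GroupAlgebra

section Commutant

variable (k : Type*) [CommRing k] {Q : Type*} [AddCommGroup Q] [Module k Q]
  {E : Type*} [Group E]

/-- The Lie subalgebra of `Module.End k Q` of endomorphisms commuting with a given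
`E`-action, i.e. `End_{kE}(Q)`. -/
def commutantLie (ρ : E →* (Q ≃ₗ[k] Q)) : LieSubalgebra k (Module.End k Q) where
  carrier := {g | ∀ (e : E) (x : Q), g (ρ e x) = ρ e (g x)}
  add_mem' := by
    intro f g hf hg e x
    simp [LinearMap.add_apply, hf e x, hg e x]
  zero_mem' := by intro e x; simp
  smul_mem' := by
    intro s f hf e x
    simp [LinearMap.smul_apply, hf e x]
  lie_mem' := by
    intro f g hf hg e x
    simp only [Ring.lie_def, LinearMap.sub_apply, Module.End.mul_apply, hf e, hg e, map_sub]

end Commutant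

section SDP

open SemidirectProduct

variable (k : Type*) [CommRing k] {P E : Type*} [Group P] [Group E] (φ : E →* MulAut P)

/-- The canonical embedding of `kP` into `k(P⋊E)`. -/
noncomputable abbrev iotaP : MonoidAlgebra k P →ₐ[k] MonoidAlgebra k (P ⋊[φ] E) :=
  MonoidAlgebra.mapDomainAlgHom k k (SemidirectProduct.inl : P →* P ⋊[φ] E)

/-- The Lie subalgebra `HH^1(kP)^E` of `HH^1(kP)`: the classes of `E`-stable derivations. -/
def eStableHH1 : LieSubalgebra k (HH1 k (MonoidAlgebra k P)) where
  carrier := {x | ∃ f : derivLie k (MonoidAlgebra k P),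
    IsEStable k φ (f : Module.End k (MonoidAlgebra k P)) ∧
    LieSubmodule.Quotient.mk (N := innerIdeal k (MonoidAlgebra k P)) f = x}
  add_mem' := by
    rintro x y ⟨f, hf, rfl⟩ ⟨g, hg, rfl⟩
    refine ⟨f + g, fun e a => ?_, by rw [← Submodule.Quotient.mk_add]⟩
    have hfg : ((f + g : derivLie k (MonoidAlgebra k P)) :
        Module.End k (MonoidAlgebra k P)) = ↑f + ↑g := rfl
    simp only [hfg, LinearMap.add_apply, hf e a, hg e a, map_add]
  zero_mem' := by
    refine ⟨0, fun e a => ?_, by rw [← (Submodule.Quotient.mk_zero _)]⟩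
    simp
  smul_mem' := by
    rintro s x ⟨f, hf, rfl⟩
    refine ⟨s • f, fun e a => ?_, by rw [← Submodule.Quotient.mk_smul]⟩
    have hsf : ((s • f : derivLie k (MonoidAlgebra k P)) :
        Module.End k (MonoidAlgebra k P)) = s • (f : Module.End k (MonoidAlgebra k P)) := rfl
    simp only [hsf, LinearMap.smul_apply, hf e a, map_smul]
  lie_mem' := by
    rintro x y ⟨f, hf, rfl⟩ ⟨g, hg, rfl⟩
    refine ⟨⁅f, g⁆, fun e a => ?_, by rw [LieSubmodule.Quotient.mk_bracket]⟩
    have hfg : ((⁅f, g⁆ : derivLie k (MonoidAlgebra k P)) :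
        Module.End k (MonoidAlgebra k P)) = ⁅(f : Module.End k (MonoidAlgebra k P)), ↑g⁆ := rfl
    simp only [hfg, Ring.lie_def, LinearMap.sub_apply, Module.End.mul_apply,
      hf e, hg e, map_sub]

end SDP

section Derivations

variable {k B : Type*} [CommRing k] [Ring B] [Algebra k B]

lemma IsDerivation.map_one {g : Module.End k B} (hg : IsDerivation g) : g 1 = 0 := by
  simpa using hg 1 1

lemma IsDerivation.sub {f g : Module.End k B} (hf : IsDerivation f) (hg : IsDerivation g) :
    IsDerivation (f - g) := by
  simpa [sub_eq_add_neg] using hf.add (hg.smul (-1))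

lemma IsDerivation.map_mul_mul_of_eq_zero {g : Module.End k B} (hg : IsDerivation g) {u v : B}
    (hu : g u = 0) (hv : g v = 0) (x : B) : g (u * x * v) = u * g x * v := by
  rw [hg, hg, hu, hv]; simp

lemma innerDeriv_eq_of_commute_algEquiv {c : B} {σ : B ≃ₐ[k] B}
    (hc : ∀ a, innerDeriv k c (σ a) = σ (innerDeriv k c a)) :
    innerDeriv k (σ c) = innerDeriv k c := by
  ext b
  simpa [innerDeriv_apply] using (hc (σ.symm b)).symm

lemma innerDeriv_sum {ι : Type*} (s : Finset ι) (c : ι → B) :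
    innerDeriv k (∑ i ∈ s, c i) = ∑ i ∈ s, innerDeriv k (c i) :=
  map_sum (AddMonoidHom.mk' (innerDeriv k) innerDeriv_add) c s

variable {E : Type*} [Group E] [Fintype E] [Invertible (Fintype.card E : k)]

/-- The vanishing of `H¹(E, B)` when `|E|` is invertible in `k`. -/
lemma IsDerivation.exists_innerDeriv_eq_on_monoidHom {g : Module.End k B} (hg : IsDerivation g)
    (ρ : E →* B) : ∃ c : B, ∀ y : E, g (ρ y) = innerDeriv k c (ρ y) := by
  refine ⟨⅟(Fintype.card E : k) • ∑ y, g (ρ y) * ρ y⁻¹, fun z => ?_⟩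
  have hleib : ∀ y, ρ z * g (ρ y) = g (ρ (z * y)) - g (ρ z) * ρ y := fun y => by
    rw [map_mul, hg]; abel
  have hshift : ∑ y, g (ρ y) * ρ y⁻¹ * ρ z = ∑ y, g (ρ (z * y)) * ρ y⁻¹ := by
    refine (Fintype.sum_equiv (Equiv.mulLeft z) _ _ fun y => ?_).symm
    simp [mul_assoc, ← map_mul]
  have hsum : (∑ y, g (ρ y) * ρ y⁻¹) * ρ z - ρ z * ∑ y, g (ρ y) * ρ y⁻¹ =
      (Fintype.card E : k) • g (ρ z) := by
    have hcancel : ∀ y, ρ y * ρ y⁻¹ = 1 := fun y => by rw [← map_mul, mul_inv_cancel, ρ.map_one]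
    simp only [Finset.sum_mul, Finset.mul_sum, ← mul_assoc, hleib, sub_mul, mul_assoc (g (ρ z)),
      hcancel, mul_one, Finset.sum_sub_distrib, hshift, Finset.sum_const, Finset.card_univ,
      sub_sub_cancel, Nat.cast_smul_eq_nsmul]
  rw [innerDeriv_apply, smul_mul_assoc, mul_smul_comm, ← smul_sub, hsum, smul_smul,
    invOf_mul_self, one_smul]

lemma exists_fixed_innerDeriv_eq (ρ : E →* (B ≃ₐ[k] B)) {c : B}
    (hc : ∀ y a, innerDeriv k c (ρ y a) = ρ y (innerDeriv k c a)) :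
    ∃ c' : B, (∀ y, ρ y c' = c') ∧ innerDeriv k c' = innerDeriv k c := by
  refine ⟨⅟(Fintype.card E : k) • ∑ y, ρ y c, fun w => ?_, ?_⟩
  · rw [map_smul, map_sum]
    congr 1
    exact Fintype.sum_equiv (Equiv.mulLeft w) _ _ fun y => by simp [AlgEquiv.mul_apply]
  · simp only [innerDeriv_smul, innerDeriv_sum, innerDeriv_eq_of_commute_algEquiv (hc _),
      Finset.sum_const, Finset.card_univ, ← Nat.cast_smul_eq_nsmul k, smul_smul, invOf_mul_self,
      one_smul]

/-- `D'` is the average of the conjugates `ρ z * D * ρ z⁻¹`. -/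
lemma IsDerivation.exists_centralizing_innerDeriv_sub_mem {g : Module.End k B}
    (hg : IsDerivation g) (ρ : E →* B) (hg0 : ∀ y, g (ρ y) = 0) {V : Submodule k B}
    (hV : ∀ y, ∀ v ∈ V, ρ y * v * ρ y⁻¹ ∈ V)
    {D : B} (hD : ∀ v ∈ V, g v - innerDeriv k D v ∈ V) :
    ∃ D' : B, (∀ y, innerDeriv k D' (ρ y) = 0) ∧ ∀ v ∈ V, g v - innerDeriv k D' v ∈ V := by
  have hinv : ∀ z, ρ z * ρ z⁻¹ = 1 := fun z => by rw [← map_mul, mul_inv_cancel, ρ.map_one]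
  set D'' := ∑ z, ρ z * D * ρ z⁻¹
  refine ⟨⅟(Fintype.card E : k) • D'', fun y => ?_, fun v hv => ?_⟩
  · have hcomm : D'' * ρ y = ρ y * D'' := by
      simp only [D'', Finset.sum_mul, Finset.mul_sum]
      refine Fintype.sum_equiv (Equiv.mulLeft y⁻¹) _ _ fun z => ?_
      simp only [Equiv.coe_mulLeft, map_mul, mul_inv_rev, inv_inv, mul_assoc]
      rw [← mul_assoc (ρ y), hinv, one_mul]
    rw [innerDeriv_apply, smul_mul_assoc, mul_smul_comm, hcomm, sub_self]
  · have hconj : ∀ z, ρ z * (g (ρ z⁻¹ * v * ρ z) - innerDeriv k D (ρ z⁻¹ * v * ρ z)) * ρ z⁻¹ =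
        g v - (ρ z * D * ρ z⁻¹ * v - v * (ρ z * D * ρ z⁻¹)) := fun z => by
      rw [mul_sub, sub_mul, ← hg.map_mul_mul_of_eq_zero (hg0 z) (hg0 z⁻¹)]
      simp only [innerDeriv_apply, mul_sub, sub_mul, ← mul_assoc, hinv, one_mul]
      simp only [mul_assoc, hinv, mul_one]
    have hmem : ∀ z, ρ z * (g (ρ z⁻¹ * v * ρ z) - innerDeriv k D (ρ z⁻¹ * v * ρ z)) * ρ z⁻¹ ∈ V :=
      fun z => hV z _ (hD _ (by simpa using hV z⁻¹ v hv))
    have havg : g v - innerDeriv k (⅟(Fintype.card E : k) • D'') v =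
        ⅟(Fintype.card E : k) • ∑ z, (g v - (ρ z * D * ρ z⁻¹ * v - v * (ρ z * D * ρ z⁻¹))) := by
      rw [Finset.sum_sub_distrib, Finset.sum_const, Finset.card_univ, ← Nat.cast_smul_eq_nsmul k,
        smul_sub, smul_smul, invOf_mul_self, one_smul, Finset.sum_sub_distrib, ← Finset.sum_mul,
        ← Finset.mul_sum, innerDeriv_apply, smul_mul_assoc, mul_smul_comm, smul_sub]
    rw [havg, ← Finset.sum_congr rfl fun z _ => hconj z]
    exact V.smul_mem _ (V.sum_mem fun z _ => hmem z)

end Derivations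

section LieRangeLift

variable {R L M N : Type*} [CommRing R] [LieRing L] [LieAlgebra R L] [LieRing M] [LieAlgebra R M]
  [LieRing N] [LieAlgebra R N] {π : L →ₗ⁅R⁆ M} {ψ : L →ₗ⁅R⁆ N}

lemma _root_.LieHom.eq_of_rangeRestrict_eq (h : π.ker ≤ ψ.ker) {x y : L}
    (hxy : π.rangeRestrict x = π.rangeRestrict y) : ψ x = ψ y := by
  have hπ : π (x - y) = 0 := by
    rw [map_sub, sub_eq_zero]; exact congrArg Subtype.val hxy
  rw [← sub_eq_zero, ← map_sub]
  exact LieHom.mem_ker.mp (h (LieHom.mem_ker.mpr hπ))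

variable (π ψ) in
noncomputable def _root_.LieHom.liftRange (h : π.ker ≤ ψ.ker) : π.range →ₗ⁅R⁆ N where
  toFun x := ψ (Function.surjInv π.surjective_rangeRestrict x)
  map_add' x y := by
    rw [← map_add]
    refine LieHom.eq_of_rangeRestrict_eq h ?_
    simp only [map_add, Function.surjInv_eq]
  map_smul' c x := by
    rw [RingHom.id_apply, ← map_smul]
    refine LieHom.eq_of_rangeRestrict_eq h ?_
    simp only [map_smul, Function.surjInv_eq]
  map_lie' {x y} := by
    rw [← LieHom.map_lie]
    refine LieHom.eq_of_rangeRestrict_eq h ?_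
    simp only [LieHom.map_lie, Function.surjInv_eq]

lemma _root_.LieHom.liftRange_rangeRestrict (h : π.ker ≤ ψ.ker) (x : L) :
    π.liftRange ψ h (π.rangeRestrict x) = ψ x :=
  LieHom.eq_of_rangeRestrict_eq h (Function.surjInv_eq _ _)

lemma _root_.LieHom.liftRange_injective (h : π.ker ≤ ψ.ker) (h' : ψ.ker ≤ π.ker) :
    Function.Injective (π.liftRange ψ h) := by
  intro x y hxy
  obtain ⟨a, rfl⟩ := π.surjective_rangeRestrict x
  obtain ⟨b, rfl⟩ := π.surjective_rangeRestrict y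
  rw [LieHom.liftRange_rangeRestrict, LieHom.liftRange_rangeRestrict] at hxy
  exact Subtype.ext (LieHom.eq_of_rangeRestrict_eq h' (Subtype.ext hxy))

lemma _root_.LieHom.liftRange_surjective (h : π.ker ≤ ψ.ker) (hψ : Function.Surjective ψ) :
    Function.Surjective (π.liftRange ψ h) := fun z => by
  obtain ⟨a, rfl⟩ := hψ z
  exact ⟨π.rangeRestrict a, LieHom.liftRange_rangeRestrict h a⟩

end LieRangeLift

section HH1

variable (k A : Type*) [CommRing k] [Ring A] [Algebra k A]

noncomputable def HH1.mk : derivLie k A →ₗ⁅k⁆ HH1 k A :=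
  { (LieSubmodule.Quotient.mk' (innerIdeal k A) : derivLie k A →ₗ[k] HH1 k A) with
    map_lie' := fun {_ _} => rfl }

variable {k A} in
lemma HH1.mk_eq_zero_iff {f : derivLie k A} :
    HH1.mk k A f = 0 ↔ ∃ c : A, (f : Module.End k A) = innerDeriv k c :=
  LieSubmodule.Quotient.mk_eq_zero'

end HH1

section FreeAction

variable {G X : Type*} [Group G] (ρ : G →* Equiv.Perm X)

/-- `β x` carries a chosen point of the orbit of `x` to `x`. -/
lemma exists_equivariant_of_free (hfree : ∀ g x, ρ g x = x → g = 1) :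
    ∃ β : X → G, ∀ g x, β (ρ g x) = g * β x := by
  let _ := MulAction.compHom X ρ
  have hmul : ∀ g h y, ρ g (ρ h y) = ρ (g * h) y := fun g h y => by
    rw [map_mul, Equiv.Perm.mul_apply]
  have hinv : ∀ g y, ρ g⁻¹ (ρ g y) = y := fun g y => by
    rw [hmul, inv_mul_cancel, map_one, Equiv.Perm.one_apply]
  let o : X → X := fun x => (Quotient.mk (MulAction.orbitRel G X) x).out
  have ho : ∀ x, ∃ g : G, ρ g (o x) = x := fun x => by
    obtain ⟨g, hg⟩ := Quotient.mk_out (s := MulAction.orbitRel G X) x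
    refine ⟨g⁻¹, ?_⟩
    change ρ g⁻¹ (Quotient.out _) = x
    rw [← hg]
    exact hinv g x
  choose β hβ using ho
  have ho_act : ∀ g x, o (ρ g x) = o x := fun g x =>
    congrArg Quotient.out (Quotient.sound ⟨g, rfl⟩ :
      Quotient.mk (MulAction.orbitRel G X) (ρ g x) = Quotient.mk _ x)
  refine ⟨β, fun g x => ?_⟩
  have h1 : ρ (β (ρ g x)) (o x) = ρ (g * β x) (o x) := by
    rw [← ho_act g x, hβ, ← hmul, ho_act, hβ]
  have h2 := hfree _ (o x) (by rw [← hmul, h1, hinv] : ρ ((g * β x)⁻¹ * β (ρ g x)) (o x) = o x)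
  exact (inv_mul_eq_one.mp h2).symm

lemma exists_eq_sub_of_cocycle_of_free {M : Type*} [AddCommGroup M]
    (hfree : ∀ g x, ρ g x = x → g = 1) (c : G → X → M)
    (hc : ∀ g h x, c (g * h) x = c g x + c h (ρ g⁻¹ x)) :
    ∃ d : X → M, ∀ g x, c g x = d x - d (ρ g⁻¹ x) := by
  obtain ⟨β, hβ⟩ := exists_equivariant_of_free ρ hfree
  refine ⟨fun x => c (β x) x, fun g x => ?_⟩
  have h := hc g (g⁻¹ * β x) x
  rw [mul_inv_cancel_left, ← hβ] at h
  change c g x = c (β x) x - c (β (ρ g⁻¹ x)) (ρ g⁻¹ x)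
  rw [h]
  abel

end FreeAction

section TwistedDerivation

variable {k P : Type*} [CommRing k] [Group P]

def twistedConj (σ : MulAut P) : P →* Equiv.Perm P where
  toFun u := (Equiv.mulLeft u).trans (Equiv.mulRight (σ u)⁻¹)
  map_one' := by ext; simp
  map_mul' u w := by ext v; simp [mul_assoc]

lemma twistedConj_apply (σ : MulAut P) (u v : P) : twistedConj σ u v = u * v * (σ u)⁻¹ := rfl

lemma eq_one_of_twistedConj_apply_eq [Finite P] {σ : MulAut P} (hσ : MonoidHom.FixedPointFree σ)
    {u v : P} (h : twistedConj σ u v = v) : u = 1 := by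
  obtain ⟨w, rfl⟩ := hσ.commutatorMap_surjective v
  have : MonoidHom.commutatorMap σ (u * w) = MonoidHom.commutatorMap σ w := by
    simp only [MonoidHom.commutatorMap_apply, div_eq_mul_inv, map_mul, mul_inv_rev] at h ⊢
    rw [← h, twistedConj_apply]
    group
  simpa using hσ.commutatorMap_injective this

lemma coeff_single_mul_mul_single_inv (u w x : P) (m : MonoidAlgebra k P) :
    (single u 1 * m * single w⁻¹ 1).coeff x = m.coeff (u⁻¹ * x * w) := by
  rw [coeff_mul_single_apply, coeff_single_mul_apply, one_mul, mul_one, inv_inv, mul_assoc]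

lemma coeff_twistedDeriv_mul_single_inv {σ : MulAut P}
    {h : MonoidAlgebra k P →ₗ[k] MonoidAlgebra k P}
    (hh : ∀ a b, h (a * b) = h a * domCongr k k σ b + a * h b) (u w x : P) :
    (h (single (u * w) 1) * single (σ (u * w))⁻¹ 1).coeff x =
      (h (single u 1) * single (σ u)⁻¹ 1).coeff x +
        (h (single w 1) * single (σ w)⁻¹ 1).coeff (twistedConj σ u⁻¹ x) := by
  have hmul : h (single (u * w) 1) =
      h (single u 1) * single (σ w) 1 + single u 1 * h (single w 1) := by
    rw [← one_mul (1 : k), ← single_mul_single, hh, domCongr_single, one_mul]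
  have hsplit : single (σ (u * w))⁻¹ (1 : k) = single (σ w)⁻¹ 1 * single (σ u)⁻¹ 1 := by
    rw [single_mul_single, one_mul, map_mul, mul_inv_rev]
  rw [hmul, add_mul, hsplit, coeff_add, Finsupp.add_apply, mul_assoc (h _),
    ← mul_assoc (single (σ w) 1), single_mul_single, mul_inv_cancel, one_mul, ← one_def, one_mul,
    ← mul_assoc (single u 1 * _), mul_assoc (single u 1), coeff_single_mul_mul_single_inv,
    twistedConj_apply, map_inv, inv_inv]

/-- `u ↦ h(u) σ(u)⁻¹` is a cocycle for the action of `P` by twisted conjugation on the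
coefficients of `kP`, and this action is free. -/
lemma exists_eq_twisted_innerDeriv [Finite P] {σ : MulAut P} (hσ : MonoidHom.FixedPointFree σ)
    (h : MonoidAlgebra k P →ₗ[k] MonoidAlgebra k P)
    (hh : ∀ a b, h (a * b) = h a * domCongr k k σ b + a * h b) :
    ∃ d, ∀ a, h a = d * domCongr k k σ a - a * d := by
  obtain ⟨d₀, hd₀⟩ := exists_eq_sub_of_cocycle_of_free (twistedConj σ)
    (fun u v => eq_one_of_twistedConj_apply_eq hσ)
    (fun u x => (h (single u 1) * single (σ u)⁻¹ 1).coeff x)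
    (coeff_twistedDeriv_mul_single_inv hh)
  let d : MonoidAlgebra k P := ofCoeff (Finsupp.equivFunOnFinite.symm d₀)
  have hd : ∀ x, d.coeff x = d₀ x := fun x => rfl
  have hsingle : ∀ u, h (single u 1) = d * single (σ u) 1 - single u 1 * d := fun u => by
    have hu : h (single u 1) = h (single u 1) * single (σ u)⁻¹ 1 * single (σ u) 1 := by
      rw [mul_assoc, single_mul_single, inv_mul_cancel, one_mul, ← one_def, mul_one]
    ext x
    rw [hu, coeff_mul_single_apply, mul_one, hd₀, coeff_sub, Finsupp.sub_apply,
      coeff_mul_single_apply, coeff_single_mul_apply, hd, hd, twistedConj_apply, map_inv, inv_inv,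
      mul_one, one_mul]
    group
  refine ⟨d, fun a => LinearMap.congr_fun (?_ : h =
    LinearMap.mulLeft k d ∘ₗ (domCongr k k σ).toLinearMap - LinearMap.mulRight k d) a⟩
  ext u
  simp [hsingle]

end TwistedDerivation

lemma isDerivation_of_single {k G : Type*} [CommRing k] [Monoid G]
    {F : Module.End k (MonoidAlgebra k G)}
    (h : ∀ x y : G, F (single x 1 * single y 1) =
      F (single x 1) * single y 1 + single x 1 * F (single y 1)) :
    IsDerivation F := by
  have hs : ∀ (x : G) (c : k), (single x c : MonoidAlgebra k G) = c • single x 1 := fun x c => by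
    rw [smul_single', mul_one]
  intro a b
  induction a using MonoidAlgebra.induction_linear with
  | zero => simp
  | add a a' ha ha' => simp only [add_mul, map_add, ha, ha']; abel
  | single x c =>
    induction b using MonoidAlgebra.induction_linear with
    | zero => simp
    | add b b' hb hb' => simp only [mul_add, map_add, hb, hb']; abel
    | single y d =>
      rw [hs x, hs y, map_smul, map_smul, smul_mul_smul_comm, map_smul, h, smul_mul_smul_comm,
        smul_mul_smul_comm, smul_add]

section SemidirectProduct

open SemidirectProduct

variable {k : Type*} [CommRing k] {P E : Type*} [Group P] [Group E] (φ : E →* MulAut P)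

local notation "kP" => MonoidAlgebra k P
local notation "kG" => MonoidAlgebra k (P ⋊[φ] E)
local notation "ι" => iotaP k φ
local notation "ε" y:max => MonoidAlgebra.single (inr y : P ⋊[φ] E) (1 : k)
local notation "τ" e:max a:max => MonoidAlgebra.domCongr k k (φ e) a

lemma iotaP_single (u : P) (c : k) : ι (single u c) = single (inl u) c := by
  simp [iotaP]

lemma single_mk (u : P) (y : E) (c : k) :
    single (⟨u, y⟩ : P ⋊[φ] E) c = ι (single u c) * ε y := by
  rw [iotaP_single, single_mul_single, mul_one, mk_eq_inl_mul_inr]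

lemma single_inr_mul_single_inr (y z : E) : ε y * ε z = ε (y * z) := by
  rw [single_mul_single, mul_one, map_mul]

lemma single_inr_one : ε 1 = (1 : kG) := by
  rw [map_one]; rfl

lemma single_inr_mul_iotaP (y : E) (a : kP) : ε y * ι a = ι (τ y a) * ε y := by
  induction a using MonoidAlgebra.induction_linear with
  | zero => simp
  | add a b ha hb => simp only [map_add, mul_add, add_mul, ha, hb]
  | single u c =>
    rw [domCongr_single, iotaP_single, iotaP_single, single_mul_single, single_mul_single, one_mul,
      mul_one, inl_aut, map_inv, inv_mul_cancel_right]

lemma single_inr_mul_iotaP_mul_single_inr_inv (y : E) (a : kP) :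
    ε y * ι a * ε y⁻¹ = ι (τ y a) := by
  rw [single_inr_mul_iotaP, mul_assoc, single_inr_mul_single_inr, mul_inv_cancel, single_inr_one,
    mul_one]

lemma iotaP_mul_single_inr_mul_iotaP_mul_single_inr (a b : kP) (y z : E) :
    ι a * ε y * (ι b * ε z) = ι (a * τ y b) * ε (y * z) := by
  rw [mul_assoc, ← mul_assoc (ε y), single_inr_mul_iotaP, mul_assoc, single_inr_mul_single_inr,
    ← mul_assoc, ← map_mul (iotaP k φ)]

lemma iotaP_injective : Function.Injective ι :=
  MonoidAlgebra.mapDomain_injective inl_injective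

lemma linearMap_ext_iotaP_mul_single_inr {N : Type*} [AddCommMonoid N] [Module k N]
    {F G : kG →ₗ[k] N} (h : ∀ a y, F (ι a * ε y) = G (ι a * ε y)) : F = G := by
  ext ⟨u, y⟩
  simpa [single_mk] using h (single u 1) y

variable (k) in
/-- The coefficient in `kP` of `y` in the decomposition `k(P ⋊ E) = ⊕_y kP * y`. -/
noncomputable def component (y : E) : kG →ₗ[k] kP :=
  (coeffLinearEquiv k).symm.toLinearMap ∘ₗ
    Finsupp.lcomapDomain (fun u : P => (⟨u, y⟩ : P ⋊[φ] E)) (fun _ _ h => congrArg left h) ∘ₗ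
      (coeffLinearEquiv k).toLinearMap

lemma coeff_component (y : E) (X : kG) (u : P) : (component k φ y X).coeff u = X.coeff ⟨u, y⟩ :=
  rfl

lemma component_iotaP_mul_single_inr (a : kP) (y : E) : component k φ y (ι a * ε y) = a := by
  induction a using MonoidAlgebra.induction_linear with
  | zero => simp
  | add a b ha hb => rw [map_add, add_mul, map_add, ha, hb]
  | single v c =>
    classical
    ext u
    rw [← single_mk, coeff_component]
    simp [coeff_single, Finsupp.single_apply, SemidirectProduct.ext_iff, -mk_eq_inl_mul_inr]

lemma component_iotaP_mul_single_inr_of_ne (a : kP) {y z : E} (h : y ≠ z) :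
    component k φ z (ι a * ε y) = 0 := by
  induction a using MonoidAlgebra.induction_linear with
  | zero => simp
  | add a b ha hb => rw [map_add, add_mul, map_add, ha, hb, add_zero]
  | single v c =>
    classical
    ext u
    rw [← single_mk, coeff_component]
    simp [coeff_single, SemidirectProduct.ext_iff, h, -mk_eq_inl_mul_inr]

lemma component_one_iotaP (a : kP) : component k φ 1 (ι a) = a := by
  simpa only [single_inr_one, mul_one] using component_iotaP_mul_single_inr φ a 1

variable [Fintype E]

lemma component_sum_iotaP_mul_single_inr (F : E → kP) (z : E) :
    component k φ z (∑ y, ι (F y) * ε y) = F z := by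
  rw [map_sum, Finset.sum_eq_single z
    (fun y _ hy => component_iotaP_mul_single_inr_of_ne φ _ hy) (by simp),
    component_iotaP_mul_single_inr]

lemma sum_iotaP_component_mul_single_inr (X : kG) : ∑ y, ι (component k φ y X) * ε y = X := by
  have key : ∑ y, LinearMap.mulRight k (ε y) ∘ₗ (iotaP k φ).toLinearMap ∘ₗ component k φ y =
      LinearMap.id := linearMap_ext_iotaP_mul_single_inr φ fun a y => by
    simp only [LinearMap.sum_apply, LinearMap.comp_apply, LinearMap.mulRight_apply,
      AlgHom.toLinearMap_apply, LinearMap.id_apply]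
    rw [Finset.sum_eq_single y (fun z _ hz => by
      rw [component_iotaP_mul_single_inr_of_ne φ _ (Ne.symm hz), map_zero, zero_mul]) (by simp),
      component_iotaP_mul_single_inr]
  simpa using LinearMap.congr_fun key X

lemma component_mul_iotaP (y : E) (X : kG) (b : kP) :
    component k φ y (X * ι b) = component k φ y X * τ y b := by
  have hterm : ∀ z, ι (component k φ z X) * ε z * ι b = ι (component k φ z X * τ z b) * ε z :=
    fun z => by rw [mul_assoc, single_inr_mul_iotaP, ← mul_assoc, ← map_mul]
  conv_lhs => rw [← sum_iotaP_component_mul_single_inr φ X]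
  simp only [Finset.sum_mul, hterm, component_sum_iotaP_mul_single_inr]

lemma component_iotaP_mul (y : E) (b : kP) (X : kG) :
    component k φ y (ι b * X) = b * component k φ y X := by
  conv_lhs => rw [← sum_iotaP_component_mul_single_inr φ X]
  simp only [Finset.mul_sum, ← mul_assoc, ← map_mul, component_sum_iotaP_mul_single_inr]

lemma eq_iotaP_component_one {X : kG} (h : ∀ y, y ≠ 1 → component k φ y X = 0) :
    X = ι (component k φ 1 X) := by
  conv_lhs => rw [← sum_iotaP_component_mul_single_inr φ X]
  rw [Finset.sum_eq_single 1 (fun y _ hy => by rw [h y hy, map_zero, zero_mul]) (by simp),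
    single_inr_one, mul_one]

variable (k) in
/-- `f ↦ f̂`, where `f̂ (a * y) = f a * y` for `a ∈ kP` and `y ∈ E`. -/
noncomputable def liftEnd : Module.End k kP →ₐ[k] Module.End k kG :=
  AlgHom.ofLinearMap
    { toFun := fun f =>
        ∑ y, LinearMap.mulRight k (ε y) ∘ₗ (iotaP k φ).toLinearMap ∘ₗ f ∘ₗ component k φ y
      map_add' := fun f g => by
        simp only [LinearMap.add_comp, LinearMap.comp_add, Finset.sum_add_distrib]
      map_smul' := fun c f => by
        simp only [LinearMap.smul_comp, LinearMap.comp_smul, Finset.smul_sum, RingHom.id_apply] }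
    (LinearMap.ext fun X => by simpa using sum_iotaP_component_mul_single_inr φ X)
    (fun f g => LinearMap.ext fun X => by
      simp only [LinearMap.coe_mk, AddHom.coe_mk, Module.End.mul_apply, LinearMap.sum_apply,
        LinearMap.comp_apply, LinearMap.mulRight_apply, AlgHom.toLinearMap_apply,
        component_sum_iotaP_mul_single_inr])

lemma liftEnd_apply (f : Module.End k kP) (X : kG) :
    liftEnd k φ f X = ∑ y, ι (f (component k φ y X)) * ε y := by
  simp [liftEnd]

lemma liftEnd_iotaP_mul_single_inr (f : Module.End k kP) (a : kP) (y : E) :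
    liftEnd k φ f (ι a * ε y) = ι (f a) * ε y := by
  rw [liftEnd_apply, Finset.sum_eq_single y (fun z _ hz => by
    rw [component_iotaP_mul_single_inr_of_ne φ _ (Ne.symm hz), map_zero, map_zero, zero_mul])
    (by simp), component_iotaP_mul_single_inr]

lemma liftEnd_iotaP (f : Module.End k kP) (a : kP) : liftEnd k φ f (ι a) = ι (f a) := by
  simpa only [single_inr_one, mul_one] using liftEnd_iotaP_mul_single_inr φ f a 1

lemma liftEnd_single_inr {f : Module.End k kP} (hf : f 1 = 0) (y : E) :
    liftEnd k φ f (ε y) = 0 := by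
  simpa only [map_one, one_mul, hf, map_zero, zero_mul] using
    liftEnd_iotaP_mul_single_inr φ f 1 y

lemma isDerivation_liftEnd {f : Module.End k kP} (hf : IsDerivation f) (hst : IsEStable k φ f) :
    IsDerivation (liftEnd k φ f) := by
  refine isDerivation_of_single fun ⟨u, y⟩ ⟨v, z⟩ => ?_
  simp only [single_mk, iotaP_mul_single_inr_mul_iotaP_mul_single_inr,
    liftEnd_iotaP_mul_single_inr, hf _ _, hst y, map_add, add_mul]

lemma eq_liftEnd {f : Module.End k kP} {g : Module.End k kG} (hg : IsDerivation g)
    (hgf : ∀ a, g (ι a) = ι (f a)) (hg0 : ∀ y, g (ε y) = 0) : g = liftEnd k φ f :=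
  linearMap_ext_iotaP_mul_single_inr φ fun a y => by
    rw [hg, hgf, hg0, mul_zero, add_zero, liftEnd_iotaP_mul_single_inr]

lemma liftEnd_innerDeriv {c : kP} (hc : ∀ e, τ e c = c) :
    liftEnd k φ (innerDeriv k c) = innerDeriv k (ι c) :=
  linearMap_ext_iotaP_mul_single_inr φ fun a y => by
    rw [liftEnd_iotaP_mul_single_inr, innerDeriv_apply, innerDeriv_apply, map_sub, sub_mul,
      map_mul, map_mul, mul_assoc (ι a) (ε y), single_inr_mul_iotaP, hc]
    simp only [mul_assoc]

lemma eq_innerDeriv_of_liftEnd_eq {f : Module.End k kP} {C : kG}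
    (h : liftEnd k φ f = innerDeriv k C) : f = innerDeriv k (component k φ 1 C) :=
  LinearMap.ext fun a => by
    have := congrArg (component k φ 1) (LinearMap.congr_fun h (ι a))
    rwa [liftEnd_iotaP, component_one_iotaP, innerDeriv_apply, map_sub, component_mul_iotaP,
      component_iotaP_mul, map_one, MulAut.one_def, domCongr_refl] at this

lemma exists_eq_liftEnd {g : Module.End k kG} (hg : IsDerivation g) (hg0 : ∀ y, g (ε y) = 0)
    (hgP : ∀ a, g (ι a) ∈ LinearMap.range (iotaP k φ).toLinearMap) :
    ∃ f, IsDerivation f ∧ IsEStable k φ f ∧ g = liftEnd k φ f := by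
  let f := component k φ 1 ∘ₗ g ∘ₗ (iotaP k φ).toLinearMap
  have hgf : ∀ a, g (ι a) = ι (f a) := fun a => by
    obtain ⟨b, hb⟩ := hgP a
    simp only [f, LinearMap.comp_apply, AlgHom.toLinearMap_apply, ← hb, component_one_iotaP]
  refine ⟨f, fun a b => iotaP_injective φ ?_, fun e a => iotaP_injective φ ?_,
    eq_liftEnd φ hg hgf hg0⟩
  · rw [← hgf, map_mul, hg, hgf, hgf, map_add, map_mul, map_mul]
  · rw [← hgf, ← single_inr_mul_iotaP_mul_single_inr_inv,
      hg.map_mul_mul_of_eq_zero (hg0 e) (hg0 e⁻¹), hgf, single_inr_mul_iotaP_mul_single_inr_inv]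

lemma exists_innerDeriv_sub_mem_range [Finite P]
    (hfree : ∀ y, y ≠ 1 → MonoidHom.FixedPointFree (φ y)) {g : Module.End k kG}
    (hg : IsDerivation g) :
    ∃ D : kG, ∀ a, g (ι a) - innerDeriv k D (ι a) ∈ LinearMap.range (iotaP k φ).toLinearMap := by
  have htwisted : ∀ y, y ≠ 1 → ∃ d : kP, ∀ a, component k φ y (g (ι a)) = d * τ y a - a * d :=
    fun y hy => exists_eq_twisted_innerDeriv (hfree y hy)
      (component k φ y ∘ₗ g ∘ₗ (iotaP k φ).toLinearMap) fun a b => by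
        simp only [LinearMap.comp_apply, AlgHom.toLinearMap_apply, map_mul, hg _ _, map_add,
          component_mul_iotaP, component_iotaP_mul]
  choose! d hd using htwisted
  refine ⟨∑ y, ι (d y) * ε y, fun a => ⟨_, (eq_iotaP_component_one φ fun y hy => ?_).symm⟩⟩
  have hD : innerDeriv k (∑ y, ι (d y) * ε y) (ι a) = ∑ y, ι (d y * τ y a - a * d y) * ε y := by
    simp only [innerDeriv_apply, Finset.sum_mul, Finset.mul_sum, ← Finset.sum_sub_distrib,
      map_sub, map_mul, sub_mul, mul_assoc, single_inr_mul_iotaP]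
  rw [map_sub, hD, component_sum_iotaP_mul_single_inr, hd y hy, sub_self]

lemma exists_eq_liftEnd_add_innerDeriv [Finite P] [Invertible (Fintype.card E : k)]
    (hfree : ∀ y, y ≠ 1 → MonoidHom.FixedPointFree (φ y)) {g : Module.End k kG}
    (hg : IsDerivation g) :
    ∃ f, IsDerivation f ∧ IsEStable k φ f ∧ ∃ C : kG, g = liftEnd k φ f + innerDeriv k C := by
  let ρ : E →* kG := (MonoidAlgebra.of k _).comp inr
  obtain ⟨c, hc⟩ := hg.exists_innerDeriv_eq_on_monoidHom ρ
  have hg₁ : IsDerivation (g - innerDeriv k c) := hg.sub (innerDeriv_isDerivation c)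
  have hg₁0 : ∀ y, (g - innerDeriv k c) (ρ y) = 0 := fun y => sub_eq_zero.mpr (hc y)
  obtain ⟨D, hD⟩ := exists_innerDeriv_sub_mem_range φ hfree hg₁
  obtain ⟨D', hD'0, hD'⟩ := hg₁.exists_centralizing_innerDeriv_sub_mem ρ hg₁0
    (V := LinearMap.range (iotaP k φ).toLinearMap)
    (by
      rintro y _ ⟨a, rfl⟩
      exact ⟨τ y a, (single_inr_mul_iotaP_mul_single_inr_inv φ y a).symm⟩)
    (by
      rintro _ ⟨a, rfl⟩
      exact hD a)
  obtain ⟨f, hf, hfst, hfg⟩ := exists_eq_liftEnd φ (hg₁.sub (innerDeriv_isDerivation D'))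
    (fun y => by rw [LinearMap.sub_apply, sub_eq_zero]; exact (hg₁0 y).trans (hD'0 y).symm)
    (fun a => hD' _ ⟨a, rfl⟩)
  exact ⟨f, hf, hfst, c + D', by rw [innerDeriv_add, ← hfg]; abel⟩

end SemidirectProduct

section HH1Map

open SemidirectProduct

variable (k : Type*) [CommRing k] {P E : Type*} [Group P] [Group E] (φ : E →* MulAut P)

local notation "kP" => MonoidAlgebra k P
local notation "kG" => MonoidAlgebra k (P ⋊[φ] E)

lemma eStableDerivLie_le_derivLie : eStableDerivLie k φ ≤ derivLie k kP := fun _ hf => hf.1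

noncomputable def eStableClass : eStableDerivLie k φ →ₗ⁅k⁆ HH1 k kP :=
  (HH1.mk k kP).comp (LieSubalgebra.inclusion (eStableDerivLie_le_derivLie k φ))

lemma coe_range_eStableClass : ((eStableClass k φ).range : Set (HH1 k kP)) = eStableHH1 k φ := by
  ext x
  constructor
  · rintro ⟨f, rfl⟩
    exact ⟨⟨f, f.2.1⟩, f.2.2, rfl⟩
  · rintro ⟨f, hf, rfl⟩
    exact ⟨⟨f, f.2, hf⟩, rfl⟩

variable [Fintype E]

noncomputable def liftDerivLie : eStableDerivLie k φ →ₗ⁅k⁆ derivLie k kG where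
  toFun f := ⟨liftEnd k φ f, isDerivation_liftEnd φ f.2.1 f.2.2⟩
  map_add' f g := Subtype.ext (map_add (liftEnd k φ) f.1 g.1)
  map_smul' c f := Subtype.ext (map_smul (liftEnd k φ) c f.1)
  map_lie' {f g} := Subtype.ext ((liftEnd k φ).toLieHom.map_lie f.1 g.1)

noncomputable def liftClass : eStableDerivLie k φ →ₗ⁅k⁆ HH1 k kG :=
  (HH1.mk k kG).comp (liftDerivLie k φ)

lemma ker_eStableClass_le [Invertible (Fintype.card E : k)] :
    (eStableClass k φ).ker ≤ (liftClass k φ).ker := by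
  intro f hf
  obtain ⟨c, hc⟩ := HH1.mk_eq_zero_iff.mp (LieHom.mem_ker.mp hf)
  have hc' : (f : Module.End k kP) = innerDeriv k c := hc
  obtain ⟨c', hc'fix, hcc'⟩ := exists_fixed_innerDeriv_eq
    ((MonoidAlgebra.domCongrAut (R := k) (A := k)).comp φ) (c := c) fun y a => by
      have h := f.2.2 y a
      rw [hc'] at h
      exact h
  refine LieHom.mem_ker.mpr (HH1.mk_eq_zero_iff.mpr ⟨iotaP k φ c', ?_⟩)
  change liftEnd k φ f = _
  rw [← liftEnd_innerDeriv φ (fun y => hc'fix y), hcc', hc']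

lemma ker_liftClass_le : (liftClass k φ).ker ≤ (eStableClass k φ).ker := by
  intro f hf
  obtain ⟨C, hC⟩ := HH1.mk_eq_zero_iff.mp (LieHom.mem_ker.mp hf)
  exact LieHom.mem_ker.mpr (HH1.mk_eq_zero_iff.mpr ⟨_, eq_innerDeriv_of_liftEnd_eq φ hC⟩)

lemma liftClass_surjective [Finite P] [Invertible (Fintype.card E : k)]
    (hfree : ∀ y, y ≠ 1 → MonoidHom.FixedPointFree (φ y)) :
    Function.Surjective (liftClass k φ) := by
  intro x
  obtain ⟨g, rfl⟩ := LieSubmodule.Quotient.surjective_mk' (innerIdeal k kG) x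
  obtain ⟨f, hf, hst, C, hg⟩ := exists_eq_liftEnd_add_innerDeriv φ hfree g.2
  refine ⟨⟨f, (mem_eStableDerivLie k).mpr ⟨hf, hst⟩⟩, (sub_eq_zero.mp ?_).symm⟩
  change HH1.mk k kG g - HH1.mk k kG (liftDerivLie k φ _) = 0
  rw [← map_sub, HH1.mk_eq_zero_iff]
  refine ⟨C, ?_⟩
  change (g : Module.End k kG) - liftEnd k φ f = _
  rw [hg, add_sub_cancel_left]

variable [Invertible (Fintype.card E : k)]

noncomputable def liftHH1 : eStableHH1 k φ →ₗ⁅k⁆ HH1 k kG :=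
  ((eStableClass k φ).liftRange (liftClass k φ) (ker_eStableClass_le k φ)).comp
    (LieEquiv.ofEq _ _ (coe_range_eStableClass k φ).symm).toLieHom

lemma liftHH1_mk (f : derivLie k kP) (hf : IsEStable k φ f) (hx) :
    liftHH1 k φ ⟨LieSubmodule.Quotient.mk f, hx⟩ = liftClass k φ ⟨f, f.2, hf⟩ :=
  LieHom.liftRange_rangeRestrict (ker_eStableClass_le k φ) ⟨f, f.2, hf⟩

lemma liftHH1_injective : Function.Injective (liftHH1 k φ) :=
  ((eStableClass k φ).liftRange_injective (ker_eStableClass_le k φ) (ker_liftClass_le k φ)).comp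
    (LieEquiv.ofEq _ _ _).injective

lemma liftHH1_surjective [Finite P] (hfree : ∀ y, y ≠ 1 → MonoidHom.FixedPointFree (φ y)) :
    Function.Surjective (liftHH1 k φ) :=
  ((eStableClass k φ).liftRange_surjective (ker_eStableClass_le k φ)
    (liftClass_surjective k φ hfree)).comp
    (LieEquiv.ofEq _ _ _).surjective

end HH1Map

open SemidirectProduct in
theorem stmt8_general (k : Type*) [Field k] (p : ℕ) [CharP k p]
    (P : Type*) [Group P] [Fintype P]
    (E : Type*) [Group E] [Fintype E] (hE : ¬ p ∣ Fintype.card E)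
    (φ : E →* MulAut P) :
    -- (i) unique extension
    (∀ f : Module.End k (MonoidAlgebra k P), IsDerivation f → IsEStable k φ f →
      (∃! g : Module.End k (MonoidAlgebra k (P ⋊[φ] E)), IsDerivation g ∧
        (∀ a : MonoidAlgebra k P, g (iotaP k φ a) = iotaP k φ (f a)) ∧
        (∀ y : E, g (MonoidAlgebra.single (inr y : P ⋊[φ] E) 1) = 0)) ∧
      (∀ g : Module.End k (MonoidAlgebra k (P ⋊[φ] E)), (IsDerivation g ∧
        (∀ a : MonoidAlgebra k P, g (iotaP k φ a) = iotaP k φ (f a)) ∧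
        (∀ y : E, g (MonoidAlgebra.single (inr y : P ⋊[φ] E) 1) = 0)) →
        ∀ (u : P) (y : E), g (MonoidAlgebra.single ((inl u : P ⋊[φ] E) * inr y) 1) =
          iotaP k φ (f (MonoidAlgebra.single u 1)) *
            MonoidAlgebra.single (inr y : P ⋊[φ] E) 1)) ∧
    -- (ii), (iii)
    (∃ Θ : eStableHH1 k φ →ₗ⁅k⁆ HH1 k (MonoidAlgebra k (P ⋊[φ] E)),
      Function.Injective Θ ∧
      -- `Θ` is induced by the correspondence `f ↦ f̂`
      (∀ (f : derivLie k (MonoidAlgebra k P))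
          (hf : IsEStable k φ (f : Module.End k (MonoidAlgebra k P)))
          (g : derivLie k (MonoidAlgebra k (P ⋊[φ] E))),
        (∀ a : MonoidAlgebra k P,
          (g : Module.End k (MonoidAlgebra k (P ⋊[φ] E))) (iotaP k φ a) =
            iotaP k φ ((f : Module.End k (MonoidAlgebra k P)) a)) →
        (∀ y : E, (g : Module.End k (MonoidAlgebra k (P ⋊[φ] E)))
          (MonoidAlgebra.single (inr y : P ⋊[φ] E) 1) = 0) →
        Θ ⟨LieSubmodule.Quotient.mk (N := innerIdeal k (MonoidAlgebra k P)) f, f, hf, rfl⟩ =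
          LieSubmodule.Quotient.mk (N := innerIdeal k (MonoidAlgebra k (P ⋊[φ] E))) g) ∧
      -- (iii) if `E` acts freely on `P∖{1}` then `Θ` is an isomorphism
      ((∀ (e : E) (u : P), φ e u = u → u = 1 ∨ e = 1) → Function.Surjective Θ)) := by
  have : Invertible (Fintype.card E : k) :=
    invertibleOfNonzero fun h => hE ((CharP.cast_eq_zero_iff k p _).mp h)
  refine ⟨fun f hf hst => ⟨?_, ?_⟩, liftHH1 k φ, liftHH1_injective k φ, ?_, fun hfree => ?_⟩
  · exact ⟨liftEnd k φ f, ⟨isDerivation_liftEnd φ hf hst, liftEnd_iotaP φ f,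
      liftEnd_single_inr φ hf.map_one⟩, fun g ⟨hg, hgf, hg0⟩ => eq_liftEnd φ hg hgf hg0⟩
  · rintro g ⟨hg, hgf, hg0⟩ u y
    rw [← mk_eq_inl_mul_inr, single_mk, hg, hgf, hg0, mul_zero, add_zero]
  · intro f hf g hgf hg0
    exact (liftHH1_mk k φ f hf _).trans
      (congrArg (HH1.mk k _) (Subtype.ext (eq_liftEnd φ g.2 hgf hg0).symm))
  · exact liftHH1_surjective k φ fun y hy u hu => (hfree y u hu).resolve_right hy

open SemidirectProduct in
/-- Let `P` be a finite `p`-group and `E` a finite `p'`-group acting on `P`.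
(i) Every `E`-stable derivation `f` on `kP` extends uniquely to a derivation `f̂` on
`k(P⋊E)` vanishing on `kE`, explicitly `f̂(uy) = f(u)y`;
(ii) `f ↦ f̂` induces an injective Lie algebra homomorphism `HH^1(kP)^E → HH^1(k(P⋊E))`;
(iii) if `E` acts freely on `P∖{1}`, this homomorphism is an isomorphism. -/
theorem stmt8 (k : Type*) [Field k] (p : ℕ) [Fact p.Prime] [CharP k p]
    (P : Type*) [Group P] [Fintype P] (hP : IsPGroup p P)
    (E : Type*) [Group E] [Fintype E] (hE : ¬ p ∣ Fintype.card E)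
    (φ : E →* MulAut P) :
    -- (i) unique extension
    (∀ f : Module.End k (MonoidAlgebra k P), IsDerivation f → IsEStable k φ f →
      (∃! g : Module.End k (MonoidAlgebra k (P ⋊[φ] E)), IsDerivation g ∧
        (∀ a : MonoidAlgebra k P, g (iotaP k φ a) = iotaP k φ (f a)) ∧
        (∀ y : E, g (MonoidAlgebra.single (inr y : P ⋊[φ] E) 1) = 0)) ∧
      (∀ g : Module.End k (MonoidAlgebra k (P ⋊[φ] E)), (IsDerivation g ∧
        (∀ a : MonoidAlgebra k P, g (iotaP k φ a) = iotaP k φ (f a)) ∧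
        (∀ y : E, g (MonoidAlgebra.single (inr y : P ⋊[φ] E) 1) = 0)) →
        ∀ (u : P) (y : E), g (MonoidAlgebra.single ((inl u : P ⋊[φ] E) * inr y) 1) =
          iotaP k φ (f (MonoidAlgebra.single u 1)) *
            MonoidAlgebra.single (inr y : P ⋊[φ] E) 1)) ∧
    -- (ii), (iii)
    (∃ Θ : eStableHH1 k φ →ₗ⁅k⁆ HH1 k (MonoidAlgebra k (P ⋊[φ] E)),
      Function.Injective Θ ∧
      -- `Θ` is induced by the correspondence `f ↦ f̂`
      (∀ (f : derivLie k (MonoidAlgebra k P))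
          (hf : IsEStable k φ (f : Module.End k (MonoidAlgebra k P)))
          (g : derivLie k (MonoidAlgebra k (P ⋊[φ] E))),
        (∀ a : MonoidAlgebra k P,
          (g : Module.End k (MonoidAlgebra k (P ⋊[φ] E))) (iotaP k φ a) =
            iotaP k φ ((f : Module.End k (MonoidAlgebra k P)) a)) →
        (∀ y : E, (g : Module.End k (MonoidAlgebra k (P ⋊[φ] E)))
          (MonoidAlgebra.single (inr y : P ⋊[φ] E) 1) = 0) →
        Θ ⟨LieSubmodule.Quotient.mk (N := innerIdeal k (MonoidAlgebra k P)) f, f, hf, rfl⟩ =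
          LieSubmodule.Quotient.mk (N := innerIdeal k (MonoidAlgebra k (P ⋊[φ] E))) g) ∧
      -- (iii) if `E` acts freely on `P∖{1}` then `Θ` is an isomorphism
      ((∀ (e : E) (u : P), φ e u = u → u = 1 ∨ e = 1) → Function.Surjective Θ)) :=
  stmt8_general k p P E hE φ

end HHPaper
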